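/- The Aleksandrov bracket (A,B) ↦ (1/(iħ))[A,B] + (1/2)({A,B} − {B,A}), where A, B are smooth functions from R² (phase space (q,p)) into a noncommutative matrix algebra, [A,B] = AB − BA, and {A,B} = ∂_q A ∂_p B − ∂_p A ∂_q B, fails the Jacobi identity in general: there exist matrix-valued functions A, B, C on R² for which the cyclic sum of nested brackets is nonzero. -/

import Mathlib

set_option synthInstance.maxHeartbeats 1000000
set_option maxHeartbeats 2000000

/-- The 2×2 complex matrix algebra, realized as operators on ℂ². -/
abbrev M2 := (Fin 2 → ℂ) →L[ℂ] (Fin 2 → ℂ)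

/-- Partial derivative in q of a matrix-valued function on phase space ℝ². -/
noncomputable def dq (A : ℝ × ℝ → M2) (z : ℝ × ℝ) : M2 := fderiv ℝ A z (1, 0)

/-- Partial derivative in p of a matrix-valued function on phase space ℝ². -/
noncomputable def dp (A : ℝ × ℝ → M2) (z : ℝ × ℝ) : M2 := fderiv ℝ A z (0, 1)

/-- The Aleksandrov quantum-classical bracket
⟨A,B⟩ = (1/(iħ))[A,B] + (1/2)({A,B} − {B,A}). -/
noncomputable def aleksandrov (h : ℝ) (A B : ℝ × ℝ → M2) (z : ℝ × ℝ) : M2 :=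
  (1 / (Complex.I * (h : ℂ))) • (A z * B z - B z * A z) +
    (1 / 2 : ℂ) • (dq A z * dp B z - dp A z * dq B z
      - dq B z * dp A z + dp B z * dq A z)

instance : @IsScalarTower ℂ M2 M2 ContinuousLinearMap.instSMul (@instSMulOfMul M2 _)
    ContinuousLinearMap.instSMul :=
  ⟨fun _ _ _ => rfl⟩

instance : @SMulCommClass ℂ M2 M2 ContinuousLinearMap.instSMul (@instSMulOfMul M2 _) :=
  ⟨fun c M N => ContinuousLinearMap.ext fun v => (M.map_smul c (N v)).symm⟩

lemma rsmul (a : ℝ) (M : M2) : a • M = (a:ℂ) • M := by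
  rw [show ((a:ℂ) • M = a • M) from algebraMap_smul ℂ a M]

lemma rzero_smul (M : M2) : (0:ℝ) • M = 0 := zero_smul ℝ M
lemma czero_smul (M : M2) : (0:ℂ) • M = 0 := zero_smul ℂ M
lemma csmul_zero (c : ℂ) : c • (0:M2) = 0 := smul_zero (A := M2) c

/-- The Pauli matrix σₓ as an operator on ℂ². -/
noncomputable def sX : M2 :=
  LinearMap.toContinuousLinearMap (Matrix.mulVecLin (Matrix.of ![![(0:ℂ),1],![1,0]]))

/-- The Pauli matrix σ_z as an operator on ℂ². -/
noncomputable def sZ : M2 :=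
  LinearMap.toContinuousLinearMap (Matrix.mulVecLin (Matrix.of ![![(1:ℂ),0],![0,-1]]))

lemma anti : sX * sZ + sZ * sX = 0 := by
  ext v i
  fin_cases i <;>
    simp [sX, sZ, ContinuousLinearMap.mul_apply, Matrix.mulVecLin_apply, Matrix.mulVec,
      dotProduct, Fin.sum_univ_two]

lemma sXX : sX * sX = 1 := by
  ext v i
  fin_cases i <;>
    simp [sX, ContinuousLinearMap.mul_apply, Matrix.mulVecLin_apply, Matrix.mulVec,
      dotProduct, Fin.sum_univ_two]

lemma sZ_ne : sZ ≠ 0 := by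
  intro hzero
  have : sZ (fun _ => 1) 0 = 0 := by rw [hzero]; rfl
  simp [sZ, Matrix.mulVecLin_apply, Matrix.mulVec, dotProduct, Fin.sum_univ_two] at this

lemma fderiv_smul_const_apply {g : ℝ × ℝ → ℝ} {z : ℝ × ℝ} (hg : DifferentiableAt ℝ g z)
    (M : M2) (v : ℝ × ℝ) :
    fderiv ℝ (fun w => g w • M) z v = fderiv ℝ g z v • M := by
  rw [fderiv_smul_const hg M]; rfl

lemma dq_fst_smul (M : M2) (z : ℝ × ℝ) : dq (fun w => w.1 • M) z = M := by
  rw [dq, fderiv_smul_const_apply differentiableAt_fst M]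
  have : fderiv ℝ (fun w : ℝ × ℝ => w.1) z = ContinuousLinearMap.fst ℝ ℝ ℝ := fderiv_fst
  rw [this]; simp

lemma dp_fst_smul (M : M2) (z : ℝ × ℝ) : dp (fun w => w.1 • M) z = 0 := by
  rw [dp, fderiv_smul_const_apply differentiableAt_fst M]
  have : fderiv ℝ (fun w : ℝ × ℝ => w.1) z = ContinuousLinearMap.fst ℝ ℝ ℝ := fderiv_fst
  rw [this]; simp
  exact zero_smul ℝ M

lemma dq_snd_smul (M : M2) (z : ℝ × ℝ) : dq (fun w => w.2 • M) z = 0 := by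
  rw [dq, fderiv_smul_const_apply differentiableAt_snd M]
  have : fderiv ℝ (fun w : ℝ × ℝ => w.2) z = ContinuousLinearMap.snd ℝ ℝ ℝ := fderiv_snd
  rw [this]; simp
  exact zero_smul ℝ M

lemma dp_snd_smul (M : M2) (z : ℝ × ℝ) : dp (fun w => w.2 • M) z = M := by
  rw [dp, fderiv_smul_const_apply differentiableAt_snd M]
  have : fderiv ℝ (fun w : ℝ × ℝ => w.2) z = ContinuousLinearMap.snd ℝ ℝ ℝ := fderiv_snd
  rw [this]; simp

lemma fderiv_mul_fst_snd (z : ℝ × ℝ) (v : ℝ × ℝ) :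
    fderiv ℝ (fun w : ℝ × ℝ => w.1 * w.2) z v = z.1 * v.2 + z.2 * v.1 := by
  have h1 : HasFDerivAt (fun w : ℝ × ℝ => w.1 * w.2)
      (z.1 • ContinuousLinearMap.snd ℝ ℝ ℝ + z.2 • ContinuousLinearMap.fst ℝ ℝ ℝ) z :=
    (hasFDerivAt_fst (p := z)).mul (hasFDerivAt_snd (p := z))
  rw [h1.fderiv]; simp

lemma dq_mul_smul (M : M2) (z : ℝ × ℝ) : dq (fun w => (w.1 * w.2) • M) z = z.2 • M := by
  rw [dq, fderiv_smul_const_apply (differentiableAt_fst.fun_mul differentiableAt_snd) M,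
    fderiv_mul_fst_snd]
  norm_num

lemma dp_mul_smul (M : M2) (z : ℝ × ℝ) : dp (fun w => (w.1 * w.2) • M) z = z.1 • M := by
  rw [dp, fderiv_smul_const_apply (differentiableAt_fst.fun_mul differentiableAt_snd) M,
    fderiv_mul_fst_snd]
  norm_num

lemma dq_cubic_zero (M : M2) : dq (fun w => (w.1 * w.2 ^ 2) • M) (0, 0) = 0 := by
  rw [dq, fderiv_smul_const_apply (by fun_prop) M]
  have hs : HasFDerivAt (fun w : ℝ × ℝ => w.2 * w.2)
      ((0:ℝ) • ContinuousLinearMap.snd ℝ ℝ ℝ + (0:ℝ) • ContinuousLinearMap.snd ℝ ℝ ℝ)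
      ((0:ℝ), (0:ℝ)) :=
    ((hasFDerivAt_snd (𝕜 := ℝ) (p := ((0:ℝ), (0:ℝ)))).mul
      (hasFDerivAt_snd (𝕜 := ℝ) (p := ((0:ℝ), (0:ℝ)))) :)
  have h1 : HasFDerivAt (fun w : ℝ × ℝ => w.1 * (w.2 * w.2))
      ((0:ℝ) • ((0:ℝ) • ContinuousLinearMap.snd ℝ ℝ ℝ + (0:ℝ) • ContinuousLinearMap.snd ℝ ℝ ℝ)
        + ((0:ℝ) * (0:ℝ)) • ContinuousLinearMap.fst ℝ ℝ ℝ) ((0:ℝ), (0:ℝ)) :=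
    (hasFDerivAt_fst (p := ((0:ℝ), (0:ℝ)))).mul hs
  have h2 : fderiv ℝ (fun w : ℝ × ℝ => w.1 * w.2 ^ 2) (0, 0) =
      fderiv ℝ (fun w : ℝ × ℝ => w.1 * (w.2 * w.2)) (0, 0) := by
    congr 1; funext w; ring
  rw [h2, h1.fderiv]; simp
  exact zero_smul ℝ M

lemma dp_cubic_zero (M : M2) : dp (fun w => (w.1 * w.2 ^ 2) • M) (0, 0) = 0 := by
  rw [dp, fderiv_smul_const_apply (by fun_prop) M]
  have hs : HasFDerivAt (fun w : ℝ × ℝ => w.2 * w.2)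
      ((0:ℝ) • ContinuousLinearMap.snd ℝ ℝ ℝ + (0:ℝ) • ContinuousLinearMap.snd ℝ ℝ ℝ)
      ((0:ℝ), (0:ℝ)) :=
    ((hasFDerivAt_snd (𝕜 := ℝ) (p := ((0:ℝ), (0:ℝ)))).mul
      (hasFDerivAt_snd (𝕜 := ℝ) (p := ((0:ℝ), (0:ℝ)))) :)
  have h1 : HasFDerivAt (fun w : ℝ × ℝ => w.1 * (w.2 * w.2))
      ((0:ℝ) • ((0:ℝ) • ContinuousLinearMap.snd ℝ ℝ ℝ + (0:ℝ) • ContinuousLinearMap.snd ℝ ℝ ℝ)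
        + ((0:ℝ) * (0:ℝ)) • ContinuousLinearMap.fst ℝ ℝ ℝ) ((0:ℝ), (0:ℝ)) :=
    (hasFDerivAt_fst (p := ((0:ℝ), (0:ℝ)))).mul hs
  have h2 : fderiv ℝ (fun w : ℝ × ℝ => w.1 * w.2 ^ 2) (0, 0) =
      fderiv ℝ (fun w : ℝ × ℝ => w.1 * (w.2 * w.2)) (0, 0) := by
    congr 1; funext w; ring
  rw [h2, h1.fderiv]; simp
  exact zero_smul ℝ M

lemma hZX : sZ * sX = -(sX * sZ) := by linear_combination (norm := module) anti

/-- ⟨B,C⟩ for B = qp·σₓ, C = p·σ_z. -/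
lemma hD (h : ℝ) :
    aleksandrov h (fun w => (w.1 * w.2) • sX) (fun w => w.2 • sZ)
      = fun z => (z.1 * z.2 ^ 2) • ((1 / (Complex.I * (h : ℂ))) • (sX * sZ - sZ * sX)) := by
  funext z
  rw [aleksandrov, dq_mul_smul, dp_mul_smul, dq_snd_smul, dp_snd_smul]
  simp only [rsmul, smul_mul_assoc, mul_smul_comm, mul_zero, zero_mul, smul_zero]
  rw [hZX]
  module

/-- ⟨A,B⟩ for A = q·σₓ, B = qp·σₓ. -/
lemma hF (h : ℝ) :
    aleksandrov h (fun w => w.1 • sX) (fun w => (w.1 * w.2) • sX)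
      = fun z => z.1 • (sX * sX) := by
  funext z
  rw [aleksandrov, dq_fst_smul, dp_fst_smul, dq_mul_smul, dp_mul_smul]
  simp only [rsmul, smul_mul_assoc, mul_smul_comm, mul_zero, zero_mul, smul_zero]
  module

/-- ⟨C,A⟩ vanishes at the origin. -/
lemma hE0 (h : ℝ) :
    aleksandrov h (fun w => w.2 • sZ) (fun w => w.1 • sX) (0, 0) = 0 := by
  rw [aleksandrov, dq_snd_smul, dp_snd_smul, dq_fst_smul, dp_fst_smul]
  simp only [rsmul, rzero_smul, czero_smul, smul_mul_assoc, mul_smul_comm, mul_zero, zero_mul,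
    smul_zero, csmul_zero]
  rw [hZX]
  module

lemma t1 (h : ℝ) :
    aleksandrov h (fun w => w.1 • sX)
      (aleksandrov h (fun w => (w.1 * w.2) • sX) (fun w => w.2 • sZ)) (0, 0) = 0 := by
  have hD0 : aleksandrov h (fun w => (w.1 * w.2) • sX) (fun w => w.2 • sZ) (0, 0) = 0 := by
    rw [hD h]; simp [rzero_smul, czero_smul, rsmul]
  rw [aleksandrov, hD0, hD h, dq_cubic_zero, dp_cubic_zero, dq_fst_smul, dp_fst_smul]
  simp [rzero_smul, czero_smul, csmul_zero, rsmul]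

lemma t2 (h : ℝ) :
    aleksandrov h (fun w => (w.1 * w.2) • sX)
      (aleksandrov h (fun w => w.2 • sZ) (fun w => w.1 • sX)) (0, 0) = 0 := by
  have h1 : dq (fun w : ℝ × ℝ => (w.1 * w.2) • sX) (0, 0) = 0 := by
    rw [dq_mul_smul]; exact rzero_smul sX
  have h2 : dp (fun w : ℝ × ℝ => (w.1 * w.2) • sX) (0, 0) = 0 := by
    rw [dp_mul_smul]; exact rzero_smul sX
  rw [aleksandrov, hE0 h, h1, h2]
  simp [rzero_smul, czero_smul, csmul_zero, rsmul]

lemma t3 (h : ℝ) :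
    aleksandrov h (fun w => w.2 • sZ)
      (aleksandrov h (fun w => w.1 • sX) (fun w => (w.1 * w.2) • sX)) (0, 0) = -sZ := by
  have hF0 : aleksandrov h (fun w => w.1 • sX) (fun w => (w.1 * w.2) • sX) (0, 0) = 0 := by
    rw [hF h]; simp [rzero_smul, czero_smul, rsmul]
  rw [aleksandrov, hF0, hF h, dq_fst_smul, dp_fst_smul, dq_snd_smul, dp_snd_smul, sXX]
  simp only [rsmul, rzero_smul, czero_smul, smul_mul_assoc, mul_smul_comm, mul_zero, zero_mul,
    mul_one, one_mul, smul_zero, csmul_zero]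
  module

/-- The Aleksandrov bracket fails the Jacobi identity: for every ħ ≠ 0 there
are smooth matrix-valued functions A, B, C on ℝ² whose cyclic sum of nested
brackets is nonzero somewhere. -/
theorem aleksandrov_fails_jacobi (h : ℝ) (hh : h ≠ 0) :
    ∃ (A B C : ℝ × ℝ → M2) (z : ℝ × ℝ),
      ContDiff ℝ (⊤ : ℕ∞) A ∧ ContDiff ℝ (⊤ : ℕ∞) B ∧ ContDiff ℝ (⊤ : ℕ∞) C ∧
      aleksandrov h A (aleksandrov h B C) z
        + aleksandrov h B (aleksandrov h C A) z
        + aleksandrov h C (aleksandrov h A B) z ≠ 0 := by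
  refine ⟨fun w => w.1 • sX, fun w => (w.1 * w.2) • sX, fun w => w.2 • sZ, (0, 0),
    (contDiff_fst.smul contDiff_const), ((contDiff_fst.mul contDiff_snd).smul contDiff_const),
    (contDiff_snd.smul contDiff_const), ?_⟩
  rw [t1 h, t2 h, t3 h]
  simpa using sZ_ne
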